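/- arXiv:0709.1570 — 4 statements merged into one kernel-verified Lean document; each statement's English description precedes it below -/
import Mathlib

section
/- For n > 1, if n - φ(n) is even, then the middle coefficient of Ψ_n(x) vanishes: c_n((n - φ(n))/2) = 0. -/
/-!
For `n > 1` the cyclotomic polynomial `Φₙ` is palindromic: its roots, the primitive `n`-th roots
of unity, are closed under inversion, and their product is `Φₙ(0) = 1`. Since `Xⁿ - 1` is
antipalindromic, the cofactor `Ψₙ = (Xⁿ - 1)/Φₙ` of degree `N = n - φ(n)` is antipalindromic,
`c(k) = -c(N - k)`, and at `k = N/2` this forces `c(N/2) = 0`.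
-/

open Polynomial

/-- The reciprocal cyclotomic polynomial Ψₙ(x) = (xⁿ - 1)/Φₙ(x). -/
noncomputable def Psi (n : ℕ) : ℤ[X] := (X ^ n - 1) /ₘ cyclotomic n ℤ

open Finset

lemma reflect_prod_X_sub_C {R : Type*} [CommRing R] (s : Finset R) :
    reflect #s (∏ z ∈ s, (X - C z)) = ∏ z ∈ s, (1 - C z * X) := by
  classical
  nontriviality R
  induction s using Finset.induction_on with
  | empty => simp [reflect_one]
  | insert a s ha ih =>
    rw [prod_insert ha, prod_insert ha, card_insert_of_notMem ha, add_comm,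
      reflect_mul _ _ (natDegree_X_sub_C_le a) (natDegree_finsetProd_X_sub_C_eq_card s fun z => z).le,
      ih, reflect_sub, reflect_one_X, reflect_C, pow_one]

lemma prod_one_sub_C_mul_X_of_inv_mem {K : Type*} [Field K] {s : Finset K} (h0 : 0 ∉ s)
    (hinv : ∀ z ∈ s, z⁻¹ ∈ s) :
    ∏ z ∈ s, (1 - C z * X) = C (∏ z ∈ s, -z) * ∏ z ∈ s, (X - C z) := by
  have hfactor : ∀ z ∈ s, 1 - C z * X = C (-z) * (X - C z⁻¹) := fun z hz => by
    have hz : z * z⁻¹ = 1 := mul_inv_cancel₀ (ne_of_mem_of_not_mem hz h0)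
    rw [map_neg, neg_mul, mul_sub, ← C_mul, hz, C_1]
    ring
  rw [prod_congr rfl hfactor, prod_mul_distrib, map_prod]
  congr 1
  exact prod_nbij' (·⁻¹) (·⁻¹) hinv hinv (fun z _ => inv_inv z) (fun z _ => inv_inv z)
    fun z _ => rfl

lemma cyclotomic_reflect_totient_of_isPrimitiveRoot {K : Type*} [Field K] {n : ℕ} {ζ : K}
    (hζ : IsPrimitiveRoot ζ n) (hn : 1 < n) :
    reflect (Nat.totient n) (cyclotomic n K) = cyclotomic n K := by
  have hn0 : 0 < n := by omega
  have hconst : ∏ z ∈ primitiveRoots n K, -z = 1 := by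
    simpa [cyclotomic_eq_prod_X_sub_primitiveRoots hζ, coeff_zero_eq_eval_zero, eval_prod]
      using cyclotomic_coeff_zero K hn
  rw [cyclotomic_eq_prod_X_sub_primitiveRoots hζ, ← hζ.card_primitiveRoots, reflect_prod_X_sub_C,
    prod_one_sub_C_mul_X_of_inv_mem, hconst, C_1, one_mul]
  · exact fun h => (((mem_primitiveRoots hn0).1 h).ne_zero hn0.ne') rfl
  · exact fun z hz => (mem_primitiveRoots hn0).2 ((mem_primitiveRoots hn0).1 hz).inv

lemma cyclotomic_reflect_totient (R : Type*) [CommRing R] {n : ℕ} (hn : 1 < n) :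
    reflect (Nat.totient n) (cyclotomic n R) = cyclotomic n R := by
  have hℤ : reflect (Nat.totient n) (cyclotomic n ℤ) = cyclotomic n ℤ := by
    apply map_injective (Int.castRingHom ℂ) Int.cast_injective
    rw [← reflect_map, map_cyclotomic]
    exact cyclotomic_reflect_totient_of_isPrimitiveRoot
      (Complex.isPrimitiveRoot_exp n (by omega)) hn
  rw [← map_cyclotomic_int, reflect_map, hℤ]

lemma reflect_X_pow_sub_one {R : Type*} [Ring R] (n : ℕ) :
    reflect n (X ^ n - 1 : R[X]) = -(X ^ n - 1) := by
  rw [reflect_sub, reflect_monomial, revAt_le le_rfl, Nat.sub_self, pow_zero, reflect_one, neg_sub]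

lemma reflect_eq_neg_of_mul_eq {R : Type*} [CommRing R] [IsDomain R] {f g h : R[X]} {a b : ℕ}
    (hfg : f * g = h) (hf : f.natDegree ≤ a) (hg : g.natDegree ≤ b) (hf0 : f ≠ 0)
    (hfa : reflect a f = f) (hh : reflect (a + b) h = -h) : reflect b g = -g := by
  rw [← hfg, reflect_mul f g hf hg, hfa, ← mul_neg] at hh
  exact mul_left_cancel₀ hf0 hh

lemma coeff_eq_zero_of_reflect_eq_neg {R : Type*} [Ring R] [NoZeroDivisors R] [CharZero R]
    {g : R[X]} {m : ℕ} (hg : reflect (2 * m) g = -g) : g.coeff m = 0 := by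
  have h := congrArg (coeff · m) hg
  simp only [coeff_reflect, coeff_neg, revAt_le (by omega : m ≤ 2 * m),
    show 2 * m - m = m by omega] at h
  exact self_eq_neg.mp h

lemma cyclotomic_mul_Psi (n : ℕ) : cyclotomic n ℤ * Psi n = X ^ n - 1 := by
  obtain ⟨q, hq⟩ := cyclotomic.dvd_X_pow_sub_one n ℤ
  rw [Psi, hq, mul_divByMonic_cancel_left _ (cyclotomic.monic n ℤ)]

lemma natDegree_Psi (n : ℕ) : (Psi n).natDegree = n - Nat.totient n := by
  rw [Psi, natDegree_divByMonic _ (cyclotomic.monic n ℤ), natDegree_cyclotomic, ← C_1,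
    natDegree_X_pow_sub_C]

lemma reflect_Psi {n : ℕ} (hn : 1 < n) : reflect (n - Nat.totient n) (Psi n) = -Psi n := by
  refine reflect_eq_neg_of_mul_eq (cyclotomic_mul_Psi n) (natDegree_cyclotomic n ℤ).le
    (natDegree_Psi n).le (cyclotomic_ne_zero n ℤ) (cyclotomic_reflect_totient ℤ hn) ?_
  rw [Nat.add_sub_cancel' (Nat.totient_le n), reflect_X_pow_sub_one]

theorem psi_middle_coeff (n : ℕ) (hn : 1 < n) (h2 : 2 ∣ (n - Nat.totient n)) :
    (Psi n).coeff ((n - Nat.totient n) / 2) = 0 := by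
  obtain ⟨m, hm⟩ := h2
  have h := reflect_Psi hn
  rw [hm] at h ⊢
  rw [Nat.mul_div_cancel_left m two_pos]
  exact coeff_eq_zero_of_reflect_eq_neg h
end

section
/- If p < q are distinct primes, then every coefficient of Ψ_{pq}(x) lies in {-1, 0, 1} (i.e., Ψ_{pq} is flat). -/
/-!
For distinct primes `p, q` the proper divisors of `pq` are `1, p, q`, so
`Ψ_{pq} = Φ₁ Φ_p Φ_q = (X^p - 1)(1 + X + ⋯ + X^{q-1})`. The `k`-th coefficient of this product
is a difference of two coefficients of the geometric sum, each of which is `0` or `1`.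
-/

open Polynomial

theorem Nat.properDivisors_prime_mul_prime {p q : ℕ} (hp : p.Prime) (hq : q.Prime) :
    (p * q).properDivisors = {1, p, q} := by
  ext d
  simp only [Nat.mem_properDivisors, Finset.mem_insert, Finset.mem_singleton]
  constructor
  · rintro ⟨hd, hlt⟩
    obtain ⟨a, b, ha, hb, rfl⟩ := Nat.dvd_mul.1 hd
    rcases (Nat.dvd_prime hp).1 ha with rfl | rfl <;>
      rcases (Nat.dvd_prime hq).1 hb with rfl | rfl <;> simp_all
  · have := hp.one_lt
    have := hq.one_lt
    rintro (rfl | rfl | rfl)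
    · exact ⟨one_dvd _, by nlinarith⟩
    · exact ⟨dvd_mul_right _ _, by nlinarith⟩
    · exact ⟨dvd_mul_left _ _, by nlinarith⟩

theorem psi_eq_prod_properDivisors {n : ℕ} (hn : 0 < n) :
    Psi n = ∏ d ∈ n.properDivisors, cyclotomic d ℤ := by
  rw [Psi, ← prod_cyclotomic_eq_X_pow_sub_one hn, ← Nat.cons_self_properDivisors hn.ne',
    Finset.prod_cons, mul_divByMonic_cancel_left _ (cyclotomic.monic n ℤ)]

theorem psi_prime_mul_prime {p q : ℕ} (hp : p.Prime) (hq : q.Prime) (hpq : p ≠ q) :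
    Psi (p * q) = (X ^ p - 1) * cyclotomic q ℤ := by
  have : Fact p.Prime := ⟨hp⟩
  have h1p : 1 ∉ ({p, q} : Finset ℕ) := by simp [hp.one_lt.ne, hq.one_lt.ne]
  have hpq' : p ∉ ({q} : Finset ℕ) := by simpa using hpq
  rw [psi_eq_prod_properDivisors (Nat.mul_pos hp.pos hq.pos),
    Nat.properDivisors_prime_mul_prime hp hq, Finset.prod_insert h1p, Finset.prod_insert hpq',
    Finset.prod_singleton, cyclotomic_one, ← cyclotomic_prime_mul_X_sub_one ℤ p]
  ring

theorem coeff_geom_sum_X (n k : ℕ) :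
    (∑ i ∈ Finset.range n, (X : ℤ[X]) ^ i).coeff k = if k < n then 1 else 0 := by
  simp [coeff_X_pow, ← Finset.mem_range, Finset.sum_ite_eq]

theorem abs_coeff_X_pow_sub_one_mul_le_one {f : ℤ[X]} (hf : ∀ k, f.coeff k ∈ Set.Icc 0 1)
    (n k : ℕ) : |((X ^ n - 1) * f).coeff k| ≤ 1 := by
  rw [sub_mul, one_mul, coeff_sub, coeff_X_pow_mul']
  have hshift : (if n ≤ k then f.coeff (k - n) else 0) ∈ Set.Icc (0 : ℤ) 1 := by
    split_ifs
    · exact hf _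
    · simp
  exact abs_sub_le_of_nonneg_of_le hshift.1 hshift.2 (hf k).1 (hf k).2

theorem psi_prime_mul_prime_flat (p q : ℕ) (hp : p.Prime) (hq : q.Prime) (hpq : p < q)
    (k : ℕ) : |(Psi (p * q)).coeff k| ≤ 1 := by
  have : Fact q.Prime := ⟨hq⟩
  rw [psi_prime_mul_prime hp hq hpq.ne, cyclotomic_prime]
  refine abs_coeff_X_pow_sub_one_mul_le_one (fun j => ?_) p k
  rw [coeff_geom_sum_X]
  split_ifs <;> simp
end

section
/- Let p < q be odd primes and let ρ, σ be the unique nonnegative integers with (p-1)(q-1) = ρp + σq. Then the coefficient a_{pq}(k) of x^k in Φ_{pq}(x) equals 1 if k = ip + jq for some 0 ≤ i ≤ ρ and 0 ≤ j ≤ σ; equals -1 if k = 1 + ip + jq for some 0 ≤ i ≤ q-2-ρ and 0 ≤ j ≤ p-2-σ; and equals 0 otherwise. -/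
/-!
Following Lam and Leung: let `A = ∑_{i ≤ ρ} X^(ip)`, `B = ∑_{j ≤ σ} X^(jq)`,
`C = ∑_{i ≤ q-2-ρ} X^(ip)`, `D = ∑_{j ≤ p-2-σ} X^(jq)`. Multiplying by `(X^p - 1)(X^q - 1)` turns
`AB - XCD` into `(X^((ρ+1)p) - 1)(X^((σ+1)q) - 1) - X(X^((q-1-ρ)p) - 1)(X^((p-1-σ)q) - 1)`,
which equals `(X^(pq) - 1)(X - 1) = Φ_pq (X^p - 1)(X^q - 1)` because
`(ρ+1)p = (p-1-σ)q + 1` and `(σ+1)q = (q-1-ρ)p + 1`. As `p, q` are coprime, the numbers `ip + jq`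
with `j < p` are pairwise distinct, so `AB` and `XCD` have `0/1` coefficients, and their supports
are disjoint.
-/

open Polynomial Finset

theorem Nat.eq_and_eq_of_mul_add_mul_eq {p q i j i' j' : ℕ} (hpq : p.Coprime q)
    (hj : j < p) (hj' : j' < p) (h : i * p + j * q = i' * p + j' * q) : i = i' ∧ j = j' := by
  have hmod : j * q ≡ j' * q [MOD p] := by
    simpa [Nat.ModEq, Nat.add_mul_mod_self_right, add_comm] using congrArg (· % p) h
  have hjj : j = j' := by
    simpa [Nat.ModEq, Nat.mod_eq_of_lt hj, Nat.mod_eq_of_lt hj'] using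
      hmod.cancel_right_of_coprime hpq
  subst hjj
  exact ⟨Nat.eq_of_mul_eq_mul_right ((Nat.zero_le j).trans_lt hj) (Nat.add_right_cancel h), rfl⟩

theorem Polynomial.cyclotomic_mul_prime_mul_X_pow_sub_one_mul {p q : ℕ} (hp : p.Prime)
    (hq : q.Prime) (hpq : p ≠ q) (R : Type*) [CommRing R] :
    cyclotomic (p * q) R * ((X ^ p - 1) * (X ^ q - 1)) = (X ^ (p * q) - 1) * (X - 1) := by
  have : Fact q.Prime := ⟨hq⟩
  have hexpand := cyclotomic_expand_eq_cyclotomic_mul hp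
    (fun h => hpq ((Nat.prime_dvd_prime_iff_eq hp hq).1 h)) R
  have hq1 := cyclotomic_prime_mul_X_sub_one R q
  have hpq1 := congrArg (expand R p) hq1
  simp only [map_mul, map_sub, expand_X, map_one, map_pow, hexpand] at hpq1
  rw [pow_mul, ← hpq1, ← hq1, mul_comm q p]
  ring

section LatticeSum

variable (R : Type*)

noncomputable def latticeSum [Semiring R] (c p q ρ σ : ℕ) : R[X] :=
  ∑ x ∈ range (ρ + 1) ×ˢ range (σ + 1), X ^ (c + x.1 * p + x.2 * q)

theorem latticeSum_mul [CommRing R] (c p q ρ σ : ℕ) :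
    latticeSum R c p q ρ σ * ((X ^ p - 1) * (X ^ q - 1)) =
      X ^ c * ((X ^ ((ρ + 1) * p) - 1) * (X ^ ((σ + 1) * q) - 1)) := by
  have geom (n m : ℕ) :
      (∑ i ∈ range n, (X : R[X]) ^ (i * m)) * (X ^ m - 1) = X ^ (n * m) - 1 := by
    simpa [← pow_mul, mul_comm] using geom_sum_mul ((X : R[X]) ^ m) n
  rw [← geom, ← geom]
  simp only [latticeSum, sum_product, pow_add, ← mul_sum, ← sum_mul]
  ring

theorem coeff_latticeSum [Semiring R] {c p q ρ σ : ℕ} (hpq : p.Coprime q) (hσ : σ < p) (k : ℕ) :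
    (latticeSum R c p q ρ σ).coeff k =
      if ∃ i ≤ ρ, ∃ j ≤ σ, k = c + i * p + j * q then 1 else 0 := by
  simp only [latticeSum, finsetSum_coeff, coeff_X_pow]
  split_ifs with hk
  · obtain ⟨i, hi, j, hj, rfl⟩ := hk
    rw [sum_eq_single_of_mem (i, j) (by simp; omega) ?_, if_pos rfl]
    rintro ⟨i', j'⟩ hij' hne
    simp only [mem_product, mem_range] at hij'
    refine if_neg fun h => hne ?_
    have h' : i' * p + j' * q = i * p + j * q := by simp only at h; omega
    obtain ⟨rfl, rfl⟩ := Nat.eq_and_eq_of_mul_add_mul_eq hpq (by omega) (by omega) h'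
    rfl
  · refine sum_eq_zero fun x hx => if_neg ?_
    rintro rfl
    simp only [mem_product, mem_range] at hx
    exact hk ⟨x.1, by omega, x.2, by omega, rfl⟩

end LatticeSum

section PQ

variable {p q ρ σ : ℕ}

theorem add_two_le_of_pred_mul_pred_eq (hp : 2 ≤ p) (hq : 2 ≤ q)
    (h : (p - 1) * (q - 1) = ρ * p + σ * q) : ρ + 2 ≤ q ∧ σ + 2 ≤ p := by
  have bound {a b s : ℕ} (ha : 2 ≤ a) (hb : 2 ≤ b) (hs : s * b ≤ (a - 1) * (b - 1)) :
      s + 2 ≤ a := by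
    have : s * b < (a - 1) * b :=
      hs.trans_lt (Nat.mul_lt_mul_of_pos_left (by omega) (by omega))
    have := Nat.lt_of_mul_lt_mul_right this
    omega
  exact ⟨bound hq hp (by rw [mul_comm (q - 1)]; omega), bound hp hq (by omega)⟩

theorem succ_mul_eq_sub_mul_add_one (hp : 2 ≤ p) (hq : 2 ≤ q)
    (h : (p - 1) * (q - 1) = ρ * p + σ * q) : (ρ + 1) * p = (p - 2 - σ + 1) * q + 1 := by
  have hσ := (add_two_le_of_pred_mul_pred_eq hp hq h).2
  have hcast : ((p - 2 - σ : ℕ) : ℤ) = p - 2 - σ := by omega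
  have hZ : ((p : ℤ) - 1) * ((q : ℤ) - 1) = ρ * p + σ * q := by
    zify [(by omega : 1 ≤ p), (by omega : 1 ≤ q)] at h
    exact h
  zify
  rw [hcast]
  linear_combination -hZ

theorem cyclotomic_mul_eq_latticeSum_sub_latticeSum (R : Type*) [CommRing R] (hp : p.Prime)
    (hq : q.Prime) (hpq : p ≠ q) (h : (p - 1) * (q - 1) = ρ * p + σ * q) :
    cyclotomic (p * q) R =
      latticeSum R 0 p q ρ σ - latticeSum R 1 p q (q - 2 - ρ) (p - 2 - σ) := by
  have hρ := succ_mul_eq_sub_mul_add_one hp.two_le hq.two_le h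
  have hσ := succ_mul_eq_sub_mul_add_one hq.two_le hp.two_le (by rw [mul_comm, add_comm, h])
  have hpq' : p * q = (p - 2 - σ + 1) * q + (q - 2 - ρ + 1) * p + 1 := by
    have : q = q - 2 - ρ + 1 + (ρ + 1) := by
      have := (add_two_le_of_pred_mul_pred_eq hp.two_le hq.two_le h).1
      omega
    conv_lhs => rw [this, mul_add, mul_comm, mul_comm p, hρ]
    ring
  have hm : (((X : R[X]) ^ p - 1) * (X ^ q - 1)).Monic := by
    simpa using (monic_X_pow_sub_C (1 : R) hp.ne_zero).mul (monic_X_pow_sub_C (1 : R) hq.ne_zero)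
  refine hm.isRegular.right ?_
  simp only
  rw [cyclotomic_mul_prime_mul_X_pow_sub_one_mul hp hq hpq, sub_mul (latticeSum R _ _ _ _ _),
    latticeSum_mul, latticeSum_mul, hpq', hρ, hσ]
  ring

theorem mul_add_mul_ne_one_add_mul_add_mul (hpq : p.Coprime q) (hp : 2 ≤ p) (hq : 2 ≤ q)
    (h : (p - 1) * (q - 1) = ρ * p + σ * q) {i j i' j' : ℕ} (hi : i ≤ ρ) (hi' : i' ≤ q - 2 - ρ) :
    i * p + j * q ≠ 1 + i' * p + j' * q := by
  intro he
  have hρ := (add_two_le_of_pred_mul_pred_eq hp hq h).1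
  have hσ := succ_mul_eq_sub_mul_add_one hq hp (by rw [mul_comm, add_comm, h])
  -- adding `(q-1-ρ)p` gives two representations whose `p`-coefficients lie in `[0, q)` but differ
  have he' : j * q + (i + (q - 2 - ρ + 1)) * p = (σ + 1 + j') * q + i' * p := by linarith
  have := (Nat.eq_and_eq_of_mul_add_mul_eq hpq.symm (by omega) (by omega) he').2
  omega

end PQ

theorem cyclotomic_pq_coeff_general (p q : ℕ) (hp : p.Prime) (hq : q.Prime)
    (hpq : p < q)
    (ρ σ : ℕ) (h : (p - 1) * (q - 1) = ρ * p + σ * q) (k : ℕ) :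
    (cyclotomic (p * q) ℤ).coeff k =
      if ∃ i ≤ ρ, ∃ j ≤ σ, k = i * p + j * q then 1
      else if ∃ i ≤ q - 2 - ρ, ∃ j ≤ p - 2 - σ, k = 1 + i * p + j * q then -1
      else 0 := by
  have hcop := (Nat.coprime_primes hp hq).2 hpq.ne
  have hbounds := add_two_le_of_pred_mul_pred_eq hp.two_le hq.two_le h
  rw [cyclotomic_mul_eq_latticeSum_sub_latticeSum ℤ hp hq hpq.ne h, coeff_sub,
    coeff_latticeSum ℤ hcop (by omega), coeff_latticeSum ℤ hcop (by omega)]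
  simp only [zero_add]
  split_ifs with hP hQ hQ
  · obtain ⟨i, hi, j, -, rfl⟩ := hP
    obtain ⟨i', hi', j', -, he⟩ := hQ
    exact absurd he (mul_add_mul_ne_one_add_mul_add_mul hcop hp.two_le hq.two_le h hi hi')
  all_goals norm_num

theorem cyclotomic_pq_coeff (p q : ℕ) (hp : p.Prime) (hq : q.Prime)
    (hop : Odd p) (hoq : Odd q) (hpq : p < q)
    (ρ σ : ℕ) (h : (p - 1) * (q - 1) = ρ * p + σ * q) (k : ℕ) :
    (cyclotomic (p * q) ℤ).coeff k =
      if ∃ i ≤ ρ, ∃ j ≤ σ, k = i * p + j * q then 1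
      else if ∃ i ≤ q - 2 - ρ, ∃ j ≤ p - 2 - σ, k = 1 + i * p + j * q then -1
      else 0 :=
  cyclotomic_pq_coeff_general p q hp hq hpq ρ σ h k
end

section
/- For distinct odd primes p < q < r, the height of Ψ_{pqr}(x) (the maximum absolute value of its coefficients) is at most ⌊(p-1)(q-1)/r⌋ + 1, and in particular at most p - 1. -/
/-!
Since `r ∤ pq`, expanding `Φ_{pq}` by `r` gives `Φ_{pq}(x^r) = Φ_{pqr}(x) Φ_{pq}(x)`, whence
`Ψ_{pqr}(x) = Φ_{pq}(x) Ψ_{pq}(x^r)`. Both factors have coefficients in `{-1, 0, 1}`: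
`Ψ_{pq}(x) = Φ_p(x) (x^q - 1)` is a difference of two disjoint blocks of ones, and
`Φ_{pq}(x) (x^{pq} - 1) = (x - 1) (∑_{i<q} x^{pi}) (∑_{j<p} x^{qj})`, where the product of the two
geometric sums has 0/1 coefficients because `pi + qj` determines `(i, j)`. A coefficient of
`Φ_{pq}(x) Ψ_{pq}(x^r)` is thus a sum of at most `⌊deg Φ_{pq} / r⌋ + 1` terms of absolute value at
most 1, and `deg Φ_{pq} = (p - 1)(q - 1) < (p - 1) r`.
-/

open Polynomial

open Finset

theorem Psi_mul_cyclotomic (n : ℕ) : Psi n * cyclotomic n ℤ = X ^ n - 1 := by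
  have h := modByMonic_add_div (X ^ n - 1 : ℤ[X]) (cyclotomic n ℤ)
  rw [(modByMonic_eq_zero_iff_dvd (cyclotomic.monic n ℤ)).2 (cyclotomic.dvd_X_pow_sub_one n ℤ),
    zero_add] at h
  rw [Psi, mul_comm, h]

theorem Psi_prime {p : ℕ} (hp : p.Prime) : Psi p = X - 1 := by
  have := Fact.mk hp
  rw [Psi, ← cyclotomic_prime_mul_X_sub_one ℤ p,
    mul_divByMonic_cancel_left _ (cyclotomic.monic p ℤ)]

theorem Psi_mul_prime {n r : ℕ} (hr : r.Prime) (hrn : ¬r ∣ n) :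
    Psi (n * r) = cyclotomic n ℤ * expand ℤ r (Psi n) := by
  apply mul_right_cancel₀ (cyclotomic.monic (n * r) ℤ).ne_zero
  have h := congrArg (expand ℤ r) (Psi_mul_cyclotomic n)
  rw [map_mul, cyclotomic_expand_eq_cyclotomic_mul hr hrn, map_sub, map_pow, expand_X, map_one,
    ← pow_mul, mul_comm r] at h
  rw [Psi_mul_cyclotomic, ← h]
  ring

theorem Psi_prime_mul_prime {p q : ℕ} (hp : p.Prime) (hq : q.Prime) (hpq : p ≠ q) :
    Psi (p * q) = cyclotomic p ℤ * (X ^ q - 1) := by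
  rw [Psi_mul_prime hq fun h => hpq ((Nat.prime_dvd_prime_iff_eq hq hp).1 h).symm, Psi_prime hp]
  simp

theorem coeff_cyclotomic_prime {R : Type*} [Ring R] {p : ℕ} (hp : p.Prime) (n : ℕ) :
    (cyclotomic p R).coeff n = if n < p then 1 else 0 := by
  have := Fact.mk hp
  simp [cyclotomic_prime, coeff_X_pow]

theorem abs_coeff_Psi_prime_mul_prime_le_one {p q : ℕ} (hp : p.Prime) (hq : q.Prime) (hpq : p < q)
    (n : ℕ) : |(Psi (p * q)).coeff n| ≤ 1 := by
  rw [Psi_prime_mul_prime hp hq hpq.ne, mul_sub, mul_one, coeff_sub, coeff_mul_X_pow',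
    coeff_cyclotomic_prime hp, coeff_cyclotomic_prime hp]
  split_ifs <;> norm_num

theorem Nat.injOn_mul_add_mul {p q : ℕ} (h : p.Coprime q) :
    Set.InjOn (fun x : ℕ × ℕ => p * x.1 + q * x.2) (range q ×ˢ range p : Finset (ℕ × ℕ)) := by
  rintro ⟨i, j⟩ hij ⟨i', j'⟩ hij' he
  simp only [coe_product, coe_range, Set.mem_prod, Set.mem_Iio] at hij hij' he
  have hi : i = i' := by
    have hmod : p * i ≡ p * i' [MOD q] := by
      simpa [Nat.ModEq, Nat.add_mul_mod_self_left] using congrArg (· % q) he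
    exact (Nat.ModEq.cancel_left_of_coprime (Nat.coprime_comm.1 h) hmod).eq_of_lt_of_lt
      hij.1 hij'.1
  subst hi
  have hq : 0 < q := by omega
  simp only [Prod.mk.injEq, true_and]
  exact Nat.eq_of_mul_eq_mul_left hq (by omega)

theorem abs_coeff_le_one_of_mul_X_pow_sub_one_eq {f g : ℤ[X]} {m : ℕ} (hf : f.natDegree < m)
    (h : f * (X ^ m - 1) = (X - 1) * g) (hg : ∀ n, 0 ≤ g.coeff n ∧ g.coeff n ≤ 1) (n : ℕ) :
    |f.coeff n| ≤ 1 := by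
  by_cases hn : m ≤ n
  · simp [coeff_eq_zero_of_natDegree_lt (hf.trans_le hn)]
  -- below degree `m` the identity reads `-f_n = g_{n-1} - g_n`
  have hc := congrArg (coeff · n) h
  simp only [mul_sub, sub_mul, mul_one, one_mul, coeff_sub, coeff_mul_X_pow', if_neg hn] at hc
  obtain _ | n := n
  · simp only [coeff_X_mul_zero] at hc
    have := hg 0
    exact abs_le.2 ⟨by linarith, by linarith⟩
  · simp only [coeff_X_mul] at hc
    have := hg n
    have := hg (n + 1)
    exact abs_le.2 ⟨by linarith, by linarith⟩

theorem coeff_geom_sum_mul_geom_sum {p q : ℕ} (h : p.Coprime q) (n : ℕ) :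
    0 ≤ ((∑ i ∈ range q, (X ^ p : ℤ[X]) ^ i) * ∑ j ∈ range p, (X ^ q) ^ j).coeff n ∧
      ((∑ i ∈ range q, (X ^ p : ℤ[X]) ^ i) * ∑ j ∈ range p, (X ^ q) ^ j).coeff n ≤ 1 := by
  have hcoeff : ((∑ i ∈ range q, (X ^ p : ℤ[X]) ^ i) * ∑ j ∈ range p, (X ^ q) ^ j).coeff n
      = (#{x ∈ range q ×ˢ range p | n = p * x.1 + q * x.2} : ℤ) := by
    rw [sum_mul_sum, ← sum_product', finsetSum_coeff]
    simp only [← pow_mul, ← pow_add, coeff_X_pow, sum_boole]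
  rw [hcoeff]
  refine ⟨by positivity, ?_⟩
  norm_cast
  exact card_le_one.2 fun x hx y hy => Nat.injOn_mul_add_mul h (mem_filter.1 hx).1
    (mem_filter.1 hy).1 ((mem_filter.1 hx).2.symm.trans (mem_filter.1 hy).2)

theorem cyclotomic_prime_mul_prime_mul_X_pow_sub_one {p q : ℕ} (hp : p.Prime) (hq : q.Prime)
    (hpq : p ≠ q) : cyclotomic (p * q) ℤ * (X ^ (p * q) - 1)
      = (X - 1) * ((∑ i ∈ range q, (X ^ p : ℤ[X]) ^ i) * ∑ j ∈ range p, (X ^ q) ^ j) := by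
  have := Fact.mk hp
  have hne : ((X : ℤ[X]) ^ p - 1) * (X ^ q - 1) ≠ 0 := by
    simpa using mul_ne_zero (X_pow_sub_C_ne_zero hp.pos (1 : ℤ)) (X_pow_sub_C_ne_zero hq.pos 1)
  -- after multiplying by `(X^p - 1)(X^q - 1)` both sides become `(X - 1)(X^{pq} - 1)^2`
  apply mul_right_cancel₀ hne
  have e1 := Psi_prime_mul_prime hp hq hpq
  have e2 := Psi_mul_cyclotomic (p * q)
  have e3 := cyclotomic_prime_mul_X_sub_one ℤ p
  have g1 := geom_sum_mul ((X : ℤ[X]) ^ p) q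
  have g2 := geom_sum_mul ((X : ℤ[X]) ^ q) p
  rw [← pow_mul] at g1 g2
  rw [mul_comm q p] at g2
  linear_combination (-(cyclotomic (p * q) ℤ * (X ^ (p * q) - 1) * (X ^ q - 1))) * e3
    - (X - 1) * (X ^ (p * q) - 1) * cyclotomic (p * q) ℤ * e1 + (X - 1) * (X ^ (p * q) - 1) * e2
    - (X - 1) * (X ^ q - 1) * (∑ j ∈ range p, ((X : ℤ[X]) ^ q) ^ j) * g1
    - (X - 1) * (X ^ (p * q) - 1) * g2

theorem abs_coeff_cyclotomic_prime_mul_prime_le_one {p q : ℕ} (hp : p.Prime) (hq : q.Prime)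
    (hpq : p ≠ q) (n : ℕ) : |(cyclotomic (p * q) ℤ).coeff n| ≤ 1 := by
  refine abs_coeff_le_one_of_mul_X_pow_sub_one_eq ?_
    (cyclotomic_prime_mul_prime_mul_X_pow_sub_one hp hq hpq)
    (coeff_geom_sum_mul_geom_sum ((Nat.coprime_primes hp hq).2 hpq)) n
  rw [natDegree_cyclotomic]
  exact Nat.totient_lt _ (Nat.one_lt_mul_iff.2 ⟨hp.pos, hq.pos, Or.inl hp.one_lt⟩)

theorem card_filter_mul_mem_window_le (s : Finset ℕ) {r : ℕ} (hr : 0 < r) (k d : ℕ) :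
    #{j ∈ s | r * j ≤ k ∧ k - r * j ≤ d} ≤ d / r + 1 := by
  set m := k / r
  set e := d / r
  have hsub : {j ∈ s | r * j ≤ k ∧ k - r * j ≤ d} ⊆ Icc (m - e) m := by
    intro j hj
    obtain ⟨-, hjk, hkd⟩ := mem_filter.1 hj
    have hj : j ≤ m := (Nat.le_div_iff_mul_le hr).2 (by linarith)
    have hgap : (m - j) * r ≤ d :=
      calc (m - j) * r = m * r - r * j := by rw [Nat.sub_mul, mul_comm j]
        _ ≤ k - r * j := Nat.sub_le_sub_right (Nat.div_mul_le_self k r) _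
        _ ≤ d := hkd
    have := (Nat.le_div_iff_mul_le hr).2 hgap
    rw [mem_Icc]
    omega
  calc _ ≤ #(Icc (m - e) m) := card_le_card hsub
    _ ≤ e + 1 := by rw [Nat.card_Icc]; clear_value m e; omega

theorem coeff_mul_expand {R : Type*} [CommSemiring R] (f g : R[X]) (r k : ℕ) :
    (f * expand R r g).coeff k
      = ∑ j ∈ range (g.natDegree + 1), g.coeff j * (f * X ^ (r * j)).coeff k := by
  conv_lhs => rw [g.as_sum_range_C_mul_X_pow]
  simp only [map_sum, map_mul, expand_C, map_pow, expand_X, mul_sum, finsetSum_coeff, ← pow_mul,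
    mul_left_comm f, coeff_C_mul]

theorem abs_coeff_mul_expand_le {f g : ℤ[X]} {r : ℕ} (hr : 0 < r) {A B : ℤ}
    (hf : ∀ n, |f.coeff n| ≤ A) (hg : ∀ n, |g.coeff n| ≤ B) (k : ℕ) :
    |(f * expand ℤ r g).coeff k| ≤ (f.natDegree / r + 1 : ℕ) * (A * B) := by
  set d := f.natDegree
  have hA : 0 ≤ A := (abs_nonneg _).trans (hf 0)
  have hB : 0 ≤ B := (abs_nonneg _).trans (hg 0)
  have hterm : ∀ j, |g.coeff j * (f * X ^ (r * j)).coeff k|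
      ≤ if r * j ≤ k ∧ k - r * j ≤ d then A * B else 0 := by
    intro j
    rw [abs_mul, coeff_mul_X_pow']
    split_ifs with hjk hwin hwin
    · rw [mul_comm A]
      exact mul_le_mul (hg j) (hf _) (abs_nonneg _) hB
    · simp [coeff_eq_zero_of_natDegree_lt (by omega : d < k - r * j)]
    · exact absurd hwin.1 hjk
    · simp
  calc |(f * expand ℤ r g).coeff k|
      ≤ ∑ j ∈ range (g.natDegree + 1), |g.coeff j * (f * X ^ (r * j)).coeff k| := by
        rw [coeff_mul_expand]; exact abs_sum_le_sum_abs _ _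
    _ ≤ ∑ j ∈ range (g.natDegree + 1), if r * j ≤ k ∧ k - r * j ≤ d then A * B else 0 :=
        sum_le_sum fun j _ => hterm j
    _ = #{j ∈ range (g.natDegree + 1) | r * j ≤ k ∧ k - r * j ≤ d} * (A * B) := by
        rw [← sum_filter, sum_const, nsmul_eq_mul]
    _ ≤ (d / r + 1 : ℕ) * (A * B) :=
        mul_le_mul_of_nonneg_right (mod_cast card_filter_mul_mem_window_le _ hr k d)
          (mul_nonneg hA hB)

theorem psi_three_primes_height_general (p q r : ℕ) (hp : p.Prime) (hq : q.Prime) (hr : r.Prime)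
    (hpq : p < q) (hqr : q < r) (k : ℕ) :
    |(Psi (p * q * r)).coeff k| ≤ ((p - 1) * (q - 1) / r + 1 : ℕ) ∧
      |(Psi (p * q * r)).coeff k| ≤ (p : ℤ) - 1 := by
  have hrpq : ¬r ∣ p * q := fun h => by
    rcases (Nat.Prime.dvd_mul hr).1 h with h | h
    · exact absurd (Nat.le_of_dvd hp.pos h) (by omega)
    · exact absurd (Nat.le_of_dvd hq.pos h) (by omega)
  have hbound : |(Psi (p * q * r)).coeff k| ≤ ((p - 1) * (q - 1) / r + 1 : ℕ) := by
    have := abs_coeff_mul_expand_le hr.pos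
      (abs_coeff_cyclotomic_prime_mul_prime_le_one hp hq hpq.ne)
      (abs_coeff_Psi_prime_mul_prime_le_one hp hq hpq) k
    rwa [← Psi_mul_prime hr hrpq, natDegree_cyclotomic,
      Nat.totient_mul ((Nat.coprime_primes hp hq).2 hpq.ne), Nat.totient_prime hp,
      Nat.totient_prime hq, mul_one, mul_one] at this
  have hlt : (p - 1) * (q - 1) / r + 1 ≤ p - 1 := by
    have := hp.two_le
    refine Nat.div_lt_of_lt_mul ?_
    rw [mul_comm r]
    exact Nat.mul_lt_mul_of_pos_left (by omega) (by omega)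
  refine ⟨hbound, hbound.trans ?_⟩
  rw [← Nat.cast_pred hp.pos]
  exact_mod_cast hlt

theorem psi_three_primes_height (p q r : ℕ) (hp : p.Prime) (hq : q.Prime) (hr : r.Prime)
    (hop : Odd p) (hoq : Odd q) (hor : Odd r) (hpq : p < q) (hqr : q < r) (k : ℕ) :
    |(Psi (p * q * r)).coeff k| ≤ ((p - 1) * (q - 1) / r + 1 : ℕ) ∧
      |(Psi (p * q * r)).coeff k| ≤ (p : ℤ) - 1 :=
  psi_three_primes_height_general p q r hp hq hr hpq hqr k
end
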